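/- arXiv:0811.3387 — 2 statements merged into one kernel-verified Lean document; each statement's English description precedes it below -/
import Mathlib

section
/- The total replication load in a fully populated k-ary prefix tree of height h equals k^h − 1: h·(k−1) + Σ_{j=1}^{h} k^{j−1}·(k−1)·(h−j)·(k−1) = k^h − 1. Consequently the average replication load per node, k^{−h}·h·(k−1) + Σ_{j=1}^{h} k^{j−h−1}·(k−1)·(h−j)·(k−1), equals exactly 1 − k^{−h}, which is 1 + O(k^{−h}). -/
lemma geo_aux (k : ℤ) (h : ℕ) :
    (k - 1) * ∑ j ∈ Finset.Icc 1 h, k ^ (j - 1) = k ^ h - 1 := by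
  induction h with
  | zero => simp
  | succ n ih =>
    rw [Finset.sum_Icc_succ_top (by omega), mul_add, ih]
    have : n + 1 - 1 = n := by omega
    rw [this]
    ring

lemma total_aux (k : ℤ) (h : ℕ) :
    (h : ℤ) * (k - 1) +
      ∑ j ∈ Finset.Icc 1 h, k ^ (j - 1) * (k - 1) * (((h : ℤ) - j) * (k - 1))
      = k ^ h - 1 := by
  induction h with
  | zero => simp
  | succ n ih =>
    rw [Finset.sum_Icc_succ_top (by omega)]
    have e : ∑ j ∈ Finset.Icc 1 n, k ^ (j - 1) * (k - 1) * (((n : ℤ) + 1 - j) * (k - 1))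
        = (∑ j ∈ Finset.Icc 1 n, k ^ (j - 1) * (k - 1) * (((n : ℤ) - j) * (k - 1)))
          + (k - 1) * ((k - 1) * ∑ j ∈ Finset.Icc 1 n, k ^ (j - 1)) := by
      rw [Finset.mul_sum, Finset.mul_sum, ← Finset.sum_add_distrib]
      apply Finset.sum_congr rfl
      intro j hj
      ring
    push_cast
    rw [e, geo_aux]
    ring_nf
    ring_nf at ih
    linarith [ih]

/-- **Average replication load** (fully populated `k`-ary prefix tree of height `h`,
`k ≥ 2`, `h ≥ 1`): the total replication load equals `k^h − 1`,
`h·(k−1) + Σ_{j=1}^{h} k^{j−1}·(k−1)·(h−j)·(k−1) = k^h − 1`, and consequently the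
average replication load per node,
`k^{−h}·h·(k−1) + Σ_{j=1}^{h} k^{j−h−1}·(k−1)·(h−j)·(k−1)`, equals exactly
`1 − k^{−h}` (which is `1 + O(k^{−h})`). -/
theorem average_replication_load (k h : ℕ) (hk : 2 ≤ k) (hh : 1 ≤ h) :
    (h * (k - 1) + ∑ j ∈ Finset.Icc 1 h, k ^ (j - 1) * (k - 1) * ((h - j) * (k - 1))
      = k ^ h - 1) ∧
    ((k : ℝ) ^ (-(h : ℤ)) * (h * ((k : ℝ) - 1)) +
        ∑ j ∈ Finset.Icc 1 h,
          (k : ℝ) ^ ((j : ℤ) - h - 1) * ((k : ℝ) - 1) * (((h : ℝ) - j) * ((k : ℝ) - 1))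
      = 1 - (k : ℝ) ^ (-(h : ℤ))) := by
  have hk1 : 1 ≤ k := by omega
  have hkR : (k : ℝ) ≠ 0 := by positivity
  constructor
  · have hz := total_aux (k : ℤ) h
    have hle : (1 : ℕ) ≤ k ^ h := Nat.one_le_pow _ _ (by omega)
    zify [hk1, hle]
    rw [← hz]
    congr 1
    apply Finset.sum_congr rfl
    intro j hj
    rw [Finset.mem_Icc] at hj
    push_cast [Nat.cast_sub hj.2, Nat.cast_sub hk1]
    ring
  · have hzR : (h : ℝ) * ((k : ℝ) - 1) +
        ∑ j ∈ Finset.Icc 1 h, (k : ℝ) ^ (j - 1) * ((k : ℝ) - 1) * (((h : ℝ) - j) * ((k : ℝ) - 1))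
        = (k : ℝ) ^ h - 1 := by
      exact_mod_cast congrArg (fun z : ℤ => (z : ℝ)) (total_aux (k : ℤ) h)
    have step : ∀ j ∈ Finset.Icc 1 h,
        (k : ℝ) ^ ((j : ℤ) - h - 1) * ((k : ℝ) - 1) * (((h : ℝ) - j) * ((k : ℝ) - 1))
        = (k : ℝ) ^ (-(h : ℤ)) * ((k : ℝ) ^ (j - 1) * ((k : ℝ) - 1) * (((h : ℝ) - j) * ((k : ℝ) - 1))) := by
      intro j hj
      rw [Finset.mem_Icc] at hj
      have : ((j : ℤ) - h - 1) = (-(h : ℤ)) + ((j - 1 : ℕ) : ℤ) := by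
        omega
      rw [this, zpow_add₀ hkR, zpow_natCast]
      ring
    have hpow : (k : ℝ) ^ (-(h : ℤ)) * (k : ℝ) ^ h = 1 := by
      rw [zpow_neg, zpow_natCast, inv_mul_cancel₀ (pow_ne_zero _ hkR)]
    rw [Finset.sum_congr rfl step, ← Finset.mul_sum, ← mul_add, hzR, mul_sub, mul_one, hpow]
end

section
/- For fixed k ≥ 2, the variance of the replication load distribution of a fully populated k-ary prefix tree of height h, namely Var(h) = [k^{−h}·(h(k−1))² + Σ_{j=1}^{h} k^{j−h−1}(k−1)·((h−j)(k−1))²] − [k^{−h}·h(k−1) + Σ_{j=1}^{h} k^{j−h−1}(k−1)·(h−j)(k−1)]², tends to k as h → ∞; hence the standard deviation of the replication load is √k + O(k^{−h}). -/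
/-!
With `q = 1/k`, the replication load is `(k - 1) · min(G, h)` for a geometric variable `G` with
`P(G = i) = (1 - q) qⁱ`: the level `j` contributes `P = (1 - q) q^(h-j)` at load `(h - j)(k - 1)`,
and the root carries the remaining mass `qʰ` at load `h(k - 1)`. The truncation at `h` costs a
polynomial times `qʰ`, which vanishes, so the variance tends to that of `(k - 1) G`, namely
`(k - 1)² q / (1 - q)² = k`.
-/

open Filter Finset Topology

theorem hasSum_sq_mul_geometric_of_norm_lt_one {𝕜 : Type*} [NormedField 𝕜] {r : 𝕜}
    (hr : ‖r‖ < 1) :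
    HasSum (fun n : ℕ ↦ (n : 𝕜) ^ 2 * r ^ n) (r * (1 + r) / (1 - r) ^ 3) := by
  have hr1 : 1 - r ≠ 0 := sub_ne_zero.mpr fun h ↦ by simp [← h] at hr
  have hchoose (n : ℕ) : ((n + 2).choose 2 : 𝕜) * 2 = (n + 2) * (n + 1) := by
    have h : (n + 2).choose 2 * 2 = (n + 2) * (n + 1) := by
      simpa using (Nat.add_one_mul_choose_eq (n + 1) 1).symm
    simpa using congrArg (Nat.cast : ℕ → 𝕜) h
  -- `n² = 2·C(n+2, 2) - 3n - 2`
  have key := (hasSum_choose_mul_geometric_of_norm_lt_one 2 hr).mul_left 2 |>.sub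
    ((hasSum_coe_mul_geometric_of_norm_lt_one hr).mul_left 3) |>.sub
    ((hasSum_geometric_of_norm_lt_one hr).mul_left 2)
  rw [show r * (1 + r) / (1 - r) ^ 3 = 2 * (1 / (1 - r) ^ (2 + 1)) - 3 * (r / (1 - r) ^ 2)
    - 2 * (1 - r)⁻¹ by field_simp; ring]
  exact key.congr_fun fun n ↦ by linear_combination -(r ^ n) * hchoose n

theorem tendsto_pow_mul_mul_const_pow_of_abs_lt_one {q : ℝ} (hq : |q| < 1) (c : ℝ) (n : ℕ) :
    Tendsto (fun h : ℕ ↦ q ^ h * (h * c) ^ n) atTop (𝓝 0) := by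
  simpa [mul_pow, mul_comm, mul_left_comm] using
    (tendsto_pow_const_mul_const_pow_of_abs_lt_one n hq).const_mul (c ^ n)

noncomputable def truncGeomExpect (q : ℝ) (f : ℝ → ℝ) (h : ℕ) : ℝ :=
  q ^ h * f h + ∑ i ∈ range h, (1 - q) * q ^ i * f i

noncomputable def truncGeomVariance (q : ℝ) (f : ℝ → ℝ) (h : ℕ) : ℝ :=
  truncGeomExpect q (fun x ↦ f x ^ 2) h - truncGeomExpect q f h ^ 2

theorem tendsto_truncGeomExpect {q s : ℝ} {f : ℝ → ℝ}
    (hsum : HasSum (fun i : ℕ ↦ (1 - q) * q ^ i * f i) s)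
    (htail : Tendsto (fun h : ℕ ↦ q ^ h * f h) atTop (𝓝 0)) :
    Tendsto (truncGeomExpect q f) atTop (𝓝 s) := by
  rw [← zero_add s]
  exact htail.add hsum.tendsto_sum_nat

theorem tendsto_truncGeomExpect_mul_const {q : ℝ} (hq : |q| < 1) (c : ℝ) :
    Tendsto (truncGeomExpect q (fun x ↦ x * c)) atTop (𝓝 (c * q / (1 - q))) := by
  have hq1 : 1 - q ≠ 0 := by linarith [le_abs_self q]
  refine tendsto_truncGeomExpect ?_
    (by simpa using tendsto_pow_mul_mul_const_pow_of_abs_lt_one hq c 1)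
  rw [show c * q / (1 - q) = (1 - q) * c * (q / (1 - q) ^ 2) by field_simp]
  exact ((hasSum_coe_mul_geometric_of_norm_lt_one (𝕜 := ℝ) hq).mul_left _).congr_fun
    fun i ↦ by ring

theorem tendsto_truncGeomExpect_mul_const_sq {q : ℝ} (hq : |q| < 1) (c : ℝ) :
    Tendsto (truncGeomExpect q (fun x ↦ (x * c) ^ 2)) atTop
      (𝓝 (c ^ 2 * q * (1 + q) / (1 - q) ^ 2)) := by
  have hq1 : 1 - q ≠ 0 := by linarith [le_abs_self q]
  refine tendsto_truncGeomExpect ?_ (tendsto_pow_mul_mul_const_pow_of_abs_lt_one hq c 2)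
  rw [show c ^ 2 * q * (1 + q) / (1 - q) ^ 2 = (1 - q) * c ^ 2 * (q * (1 + q) / (1 - q) ^ 3) by
    field_simp]
  exact ((hasSum_sq_mul_geometric_of_norm_lt_one (𝕜 := ℝ) hq).mul_left _).congr_fun
    fun i ↦ by ring

theorem tendsto_truncGeomVariance_mul_const {q : ℝ} (hq : |q| < 1) (c : ℝ) :
    Tendsto (truncGeomVariance q (fun x ↦ x * c)) atTop (𝓝 (c ^ 2 * q / (1 - q) ^ 2)) := by
  have hq1 : 1 - q ≠ 0 := by linarith [le_abs_self q]
  have h := (tendsto_truncGeomExpect_mul_const_sq hq c).sub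
    ((tendsto_truncGeomExpect_mul_const hq c).pow 2)
  rwa [show c ^ 2 * q * (1 + q) / (1 - q) ^ 2 - (c * q / (1 - q)) ^ 2 = c ^ 2 * q / (1 - q) ^ 2 by
    field_simp; ring] at h

theorem sum_Icc_zpow_eq_truncGeomExpect {k : ℝ} (hk : k ≠ 0) (f : ℝ → ℝ) (h : ℕ) :
    k ^ (-(h : ℤ)) * f h + ∑ j ∈ Icc 1 h, k ^ ((j : ℤ) - h - 1) * (k - 1) * f (h - j) =
      truncGeomExpect k⁻¹ f h := by
  rw [truncGeomExpect, zpow_neg, zpow_natCast, inv_pow]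
  congr 1
  refine sum_nbij' (h - ·) (h - ·) (by simp only [mem_Icc, mem_range]; omega)
    (by simp only [mem_Icc, mem_range]; omega) (by simp only [mem_Icc]; omega)
    (by simp only [mem_range]; omega) fun j hj ↦ ?_
  have hjh : j ≤ h := (mem_Icc.mp hj).2
  have hexp : (j : ℤ) - h - 1 = -((h - j + 1 : ℕ) : ℤ) := by push_cast [Nat.cast_sub hjh]; ring
  rw [hexp, zpow_neg, zpow_natCast, ← inv_pow, Nat.cast_sub hjh, pow_succ]
  field_simp

/-- **Asymptotic variance of the replication load** (fully populated `k`-ary prefix tree,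
`k ≥ 2`): the variance
`Var(h) = [k^{−h}·(h(k−1))² + Σ_{j=1}^{h} k^{j−h−1}(k−1)·((h−j)(k−1))²]
          − [k^{−h}·h(k−1) + Σ_{j=1}^{h} k^{j−h−1}(k−1)·(h−j)(k−1)]²`
of the replication-load distribution tends to `k` as the height `h → ∞`
(hence the standard deviation of the replication load is `√k + O(k^{−h})`). -/
theorem replication_load_variance_tendsto (k : ℕ) (hk : 2 ≤ k) :
    Filter.Tendsto
      (fun h : ℕ =>
        ((k : ℝ) ^ (-(h : ℤ)) * ((h : ℝ) * ((k : ℝ) - 1)) ^ 2 +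
            ∑ j ∈ Finset.Icc 1 h,
              (k : ℝ) ^ ((j : ℤ) - h - 1) * ((k : ℝ) - 1) *
                (((h : ℝ) - j) * ((k : ℝ) - 1)) ^ 2) -
          ((k : ℝ) ^ (-(h : ℤ)) * ((h : ℝ) * ((k : ℝ) - 1)) +
            ∑ j ∈ Finset.Icc 1 h,
              (k : ℝ) ^ ((j : ℤ) - h - 1) * ((k : ℝ) - 1) *
                (((h : ℝ) - j) * ((k : ℝ) - 1))) ^ 2)
      Filter.atTop (nhds (k : ℝ)) := by
  have hk1 : (1 : ℝ) < k := by exact_mod_cast hk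
  have hk0 : (k : ℝ) ≠ 0 := by positivity
  have hq : |(k : ℝ)⁻¹| < 1 := by
    rw [abs_inv, abs_of_pos (by positivity)]
    exact inv_lt_one_of_one_lt₀ hk1
  have hlim := tendsto_truncGeomVariance_mul_const hq ((k : ℝ) - 1)
  rw [show ((k : ℝ) - 1) ^ 2 * (k : ℝ)⁻¹ / (1 - (k : ℝ)⁻¹) ^ 2 = k by
    field_simp [sub_ne_zero.mpr hk1.ne']] at hlim
  refine hlim.congr fun h ↦ ?_
  rw [truncGeomVariance, ← sum_Icc_zpow_eq_truncGeomExpect hk0,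
    ← sum_Icc_zpow_eq_truncGeomExpect hk0]
end
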